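/- arXiv:math/0202152 — 2 statements merged into one kernel-verified Lean document; each statement's English description precedes it below -/
import Mathlib

section
/- Let l ≥ 3. Then Σ_{i=3}^{l} ( H_{η₁η₂ηᵢ} ∘ H_{η₁η₂ξᵢ} + H_{η₁η₂ξᵢ} ∘ H_{η₁η₂ηᵢ} ) = 0 in End(Λ). This realizes the second defining relation (of lowest weight −2(ε₁+ε₂), with cycle Σᵢ η₁η₂ηᵢ ∧ η₁η₂ξᵢ) in the presentation of N₊ of the Hamiltonian Lie superalgebra h(0|2l) given in the paper's Table 2.1.2. -/
/-- The exterior algebra Λ of ℂ^{2l}, with generators indexed by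
`Fin l ⊕ Fin l` (left = ξ's, right = η's). -/
noncomputable abbrev Lam (l : ℕ) := ExteriorAlgebra ℂ ((Fin l ⊕ Fin l) → ℂ)

/-- The generator of Λ corresponding to index `a` (image of the standard basis). -/
noncomputable def gen (l : ℕ) (a : Fin l ⊕ Fin l) : Lam l :=
  ExteriorAlgebra.ι ℂ (Pi.single a 1)

/-- The generator ξᵢ. -/
noncomputable def xiv (l : ℕ) (i : Fin l) : Lam l := gen l (Sum.inl i)

/-- The generator ηᵢ. -/
noncomputable def etav (l : ℕ) (i : Fin l) : Lam l := gen l (Sum.inr i)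

/-- L_g : left exterior multiplication by g. -/
noncomputable def Lmul (l : ℕ) (g : Lam l) : Module.End ℂ (Lam l) :=
  LinearMap.mulLeft ℂ g

/-- `IsContraction l a D` says that `D` is the contraction ∂_ζ with the dual of
the generator ζ indexed by `a`: it kills 1, sends the generator indexed by `b`
to δ_{ab}·1, and satisfies ∂(xy) = ∂(x)y + (−1)ᵖ x ∂(y) whenever x is a product
of p generators. -/
def IsContraction (l : ℕ) (a : Fin l ⊕ Fin l) (D : Module.End ℂ (Lam l)) : Prop :=
  D 1 = 0 ∧
  (∀ b, D (gen l b) = if a = b then 1 else 0) ∧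
  (∀ (p : ℕ) (g : Fin p → (Fin l ⊕ Fin l)) (y : Lam l),
    D ((List.ofFn fun k => gen l (g k)).prod * y) =
      D ((List.ofFn fun k => gen l (g k)).prod) * y +
        ((-1 : ℂ) ^ p) • ((List.ofFn fun k => gen l (g k)).prod * D y))

/-- The Hamiltonian vector field H_f = Σᵢ (L_{∂_{ξᵢ}f} ∘ ∂_{ηᵢ} + L_{∂_{ηᵢ}f} ∘ ∂_{ξᵢ}),
realized as an endomorphism of Λ; `pd a` is the contraction operator ∂ with the
generator indexed by `a`. -/
noncomputable def Ham (l : ℕ) (pd : (Fin l ⊕ Fin l) → Module.End ℂ (Lam l))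
    (f : Lam l) : Module.End ℂ (Lam l) :=
  ∑ i : Fin l,
    (Lmul l (pd (Sum.inl i) f) ∘ₗ pd (Sum.inr i) +
     Lmul l (pd (Sum.inr i) f) ∘ₗ pd (Sum.inl i))


section aux

noncomputable def pc (l : ℕ) (a : Fin l ⊕ Fin l) : Module.End ℂ (Lam l) :=
  CliffordAlgebra.contractLeft (Q := (0 : QuadraticForm ℂ ((Fin l ⊕ Fin l) → ℂ)))
    (LinearMap.proj a)

variable {l : ℕ}

lemma pc_one (a) : pc l a 1 = 0 := CliffordAlgebra.contractLeft_one _ _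

lemma pc_gen_mul (a b) (x : Lam l) :
    pc l a (gen l b * x) = (if a = b then (1:ℂ) else 0) • x - gen l b * pc l a x := by
  have := CliffordAlgebra.contractLeft_ι_mul (Q := (0 : QuadraticForm ℂ ((Fin l ⊕ Fin l) → ℂ)))
    (d := (LinearMap.proj a)) (Pi.single b 1) x
  simpa [pc, gen, Pi.single_apply, eq_comm] using this

lemma pc_gen (a b) : pc l a (gen l b) = if a = b then (1 : Lam l) else 0 := by
  have := pc_gen_mul (l := l) a b 1
  simpa [pc_one, ite_smul] using this

lemma pc_pc_same (a) (x : Lam l) : pc l a (pc l a x) = 0 :=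
  CliffordAlgebra.contractLeft_contractLeft _ _

lemma pc_pc_comm (a b) (x : Lam l) : pc l a (pc l b x) = -pc l b (pc l a x) :=
  CliffordAlgebra.contractLeft_comm _ _ x

lemma gen_sq (a) (y : Lam l) : gen l a * (gen l a * y) = 0 := by
  rw [← mul_assoc, gen, ExteriorAlgebra.ι_sq_zero, zero_mul]

lemma gen_swap (a b) (y : Lam l) : gen l a * (gen l b * y) = -(gen l b * (gen l a * y)) := by
  have h := ExteriorAlgebra.ι_add_mul_swap (R := ℂ) (M := (Fin l ⊕ Fin l) → ℂ)
    (Pi.single a (1:ℂ)) (Pi.single b 1)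
  rw [← mul_assoc, ← mul_assoc, ← neg_mul]
  congr 1
  rw [gen, gen, eq_neg_iff_add_eq_zero]
  exact h

lemma pc_ite (c) (P : Prop) [Decidable P] (u : Lam l) :
    pc l c (if P then u else 0) = if P then pc l c u else 0 := by
  split <;> simp

lemma Lmul_apply (g x : Lam l) : Lmul l g x = g * x := rfl

lemma Lmul_zero : Lmul l 0 = 0 := by
  refine LinearMap.ext fun x => ?_; simp [Lmul_apply]

lemma Lmul_add (u v : Lam l) : Lmul l (u + v) = Lmul l u + Lmul l v := by
  refine LinearMap.ext fun x => ?_; simp [Lmul_apply, add_mul]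

lemma Lmul_sub (u v : Lam l) : Lmul l (u - v) = Lmul l u - Lmul l v := by
  refine LinearMap.ext fun x => ?_; simp [Lmul_apply, sub_mul]

lemma Lmul_ite (P : Prop) [Decidable P] (u : Lam l) :
    Lmul l (if P then u else 0) = if P then Lmul l u else 0 := by
  split <;> simp [Lmul_zero]

lemma ite_comp (P : Prop) [Decidable P] (A B : Module.End ℂ (Lam l)) :
    (if P then A else 0) ∘ₗ B = if P then A ∘ₗ B else 0 := by
  split <;> simp

section key
variable (a b c : Fin l)

-- values of pc on the two cubic monomials
lemma pc_f1_l (hab : a ≠ b) (hac : a ≠ c) (hbc : b ≠ c) (j : Fin l) :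
    pc l (Sum.inl j) (gen l (.inr a) * gen l (.inr b) * gen l (.inr c)) = 0 := by
  simp [mul_assoc, pc_gen_mul, pc_gen]

lemma pc_f1_r (hab : a ≠ b) (hac : a ≠ c) (hbc : b ≠ c) (j : Fin l) :
    pc l (Sum.inr j) (gen l (.inr a) * gen l (.inr b) * gen l (.inr c)) =
      (if j = a then gen l (.inr b) * gen l (.inr c) else 0)
      - (if j = b then gen l (.inr a) * gen l (.inr c) else 0)
      + (if j = c then gen l (.inr a) * gen l (.inr b) else 0) := by
  simp only [mul_assoc, pc_gen_mul, pc_gen, Sum.inr.injEq]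
  by_cases h1 : j = a <;> by_cases h2 : j = b <;> by_cases h3 : j = c <;>
    simp_all <;> abel

lemma pc_f2_l (hab : a ≠ b) (j : Fin l) :
    pc l (Sum.inl j) (gen l (.inr a) * gen l (.inr b) * gen l (.inl c)) =
      (if j = c then gen l (.inr a) * gen l (.inr b) else 0) := by
  simp only [mul_assoc, pc_gen_mul, pc_gen, Sum.inl.injEq, reduceCtorEq]
  by_cases h3 : j = c <;> simp_all

lemma pc_f2_r (hab : a ≠ b) (j : Fin l) :
    pc l (Sum.inr j) (gen l (.inr a) * gen l (.inr b) * gen l (.inl c)) =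
      (if j = a then gen l (.inr b) * gen l (.inl c) else 0)
      - (if j = b then gen l (.inr a) * gen l (.inl c) else 0) := by
  simp only [mul_assoc, pc_gen_mul, pc_gen, Sum.inr.injEq, reduceCtorEq]
  by_cases h1 : j = a <;> by_cases h2 : j = b <;> simp_all <;> abel

lemma Ham_f1 (hab : a ≠ b) (hac : a ≠ c) (hbc : b ≠ c) :
    Ham l (pc l) (gen l (.inr a) * gen l (.inr b) * gen l (.inr c)) =
      Lmul l (gen l (.inr b) * gen l (.inr c)) ∘ₗ pc l (.inl a)
      - Lmul l (gen l (.inr a) * gen l (.inr c)) ∘ₗ pc l (.inl b)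
      + Lmul l (gen l (.inr a) * gen l (.inr b)) ∘ₗ pc l (.inl c) := by
  rw [Ham]
  simp only [pc_f1_l a b c hab hac hbc, pc_f1_r a b c hab hac hbc,
    Lmul_zero, LinearMap.zero_comp, zero_add, Lmul_sub, Lmul_add, Lmul_ite,
    LinearMap.sub_comp, LinearMap.add_comp, ite_comp,
    Finset.sum_add_distrib, Finset.sum_sub_distrib,
    Finset.sum_ite_eq', Finset.mem_univ, if_true]

lemma Ham_f2 (hab : a ≠ b) :
    Ham l (pc l) (gen l (.inr a) * gen l (.inr b) * gen l (.inl c)) =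
      Lmul l (gen l (.inr b) * gen l (.inl c)) ∘ₗ pc l (.inl a)
      - Lmul l (gen l (.inr a) * gen l (.inl c)) ∘ₗ pc l (.inl b)
      + Lmul l (gen l (.inr a) * gen l (.inr b)) ∘ₗ pc l (.inr c) := by
  rw [Ham]
  simp only [pc_f2_l a b c hab, pc_f2_r a b c hab,
    Lmul_zero, LinearMap.zero_comp, zero_add, Lmul_sub, Lmul_add, Lmul_ite,
    LinearMap.sub_comp, LinearMap.add_comp, ite_comp,
    Finset.sum_add_distrib, Finset.sum_sub_distrib,
    Finset.sum_ite_eq', Finset.mem_univ, if_true]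
  abel

lemma key (hab : a ≠ b) (hac : a ≠ c) (hbc : b ≠ c) :
    Ham l (pc l) (gen l (.inr a) * gen l (.inr b) * gen l (.inr c)) ∘ₗ
      Ham l (pc l) (gen l (.inr a) * gen l (.inr b) * gen l (.inl c)) +
    Ham l (pc l) (gen l (.inr a) * gen l (.inr b) * gen l (.inl c)) ∘ₗ
      Ham l (pc l) (gen l (.inr a) * gen l (.inr b) * gen l (.inr c)) = 0 := by
  rw [Ham_f1 a b c hab hac hbc, Ham_f2 a b c hab]
  refine LinearMap.ext fun x => ?_
  simp only [LinearMap.add_apply, LinearMap.sub_apply, LinearMap.comp_apply,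
    LinearMap.zero_apply, Lmul_apply, map_add, map_sub, map_mul]
  simp only [mul_assoc, pc_gen_mul, pc_gen, Sum.inr.injEq, Sum.inl.injEq, reduceCtorEq,
    hab, hac, hbc, Ne.symm hab, Ne.symm hac, Ne.symm hbc,
    if_true, if_false, ite_self, one_smul, zero_smul, ite_smul, smul_ite, smul_zero,
    mul_sub, mul_add, mul_neg, mul_zero, zero_mul, sub_zero, zero_sub, neg_neg, map_sub, map_add,
    map_neg, map_zero, pc_pc_same, pc_ite,
    gen_sq, gen_swap (Sum.inr b) (Sum.inr a), gen_swap (Sum.inr c) (Sum.inr a),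
    gen_swap (Sum.inr c) (Sum.inr b), gen_swap (Sum.inl c) (Sum.inr a),
    gen_swap (Sum.inl c) (Sum.inr b), gen_swap (Sum.inl c) (Sum.inr c),
    pc_pc_comm (Sum.inl (b : Fin l)) (Sum.inl a), pc_pc_comm (Sum.inl (c : Fin l)) (Sum.inl a),
    pc_pc_comm (Sum.inl (c : Fin l)) (Sum.inl b), pc_pc_comm (Sum.inr (c : Fin l)) (Sum.inl a),
    pc_pc_comm (Sum.inr (c : Fin l)) (Sum.inl b), pc_pc_comm (Sum.inr (c : Fin l)) (Sum.inl c)]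
  abel

end key


-- span of monomials and uniqueness of contraction
def monSet (l : ℕ) : Set (Lam l) :=
  Set.range (fun L : List (Fin l ⊕ Fin l) => (L.map (gen l)).prod)

lemma monSet_span {l : ℕ} : Submodule.span ℂ (monSet l) = ⊤ := by
  rw [Submodule.eq_top_iff']
  intro x
  induction x using ExteriorAlgebra.induction with
  | algebraMap r =>
      have h1 : (1 : Lam l) ∈ monSet l := ⟨[], by simp⟩
      have : (algebraMap ℂ (Lam l)) r = r • (1 : Lam l) := by
        simp [Algebra.algebraMap_eq_smul_one]
      rw [this]
      exact Submodule.smul_mem _ _ (Submodule.subset_span h1)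
  | ι m =>
      have hm : m = ∑ a : Fin l ⊕ Fin l, m a • (Pi.single a (1:ℂ) : (Fin l ⊕ Fin l) → ℂ) := by
        ext b; simp [Pi.single_apply]
      have : ExteriorAlgebra.ι ℂ m = ∑ a : Fin l ⊕ Fin l, m a • gen l a := by
        conv_lhs => rw [hm]
        rw [map_sum]; simp only [map_smul, gen]
      rw [this]
      refine Submodule.sum_mem _ fun a _ => Submodule.smul_mem _ _ ?_
      exact Submodule.subset_span ⟨[a], by simp⟩
  | mul x y hx hy =>
      revert y
      have aux : ∀ x ∈ Submodule.span ℂ (monSet l), ∀ y, y ∈ Submodule.span ℂ (monSet l) →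
          x * y ∈ Submodule.span ℂ (monSet l) := by
        intro x hx
        induction hx using Submodule.span_induction with
        | mem u hu =>
            intro y hy
            induction hy using Submodule.span_induction with
            | mem v hv =>
                obtain ⟨L1, rfl⟩ := hu
                obtain ⟨L2, rfl⟩ := hv
                exact Submodule.subset_span ⟨L1 ++ L2, by simp⟩
            | zero => rw [mul_zero]; exact Submodule.zero_mem _
            | add v w _ _ h1 h2 => rw [mul_add]; exact Submodule.add_mem _ h1 h2
            | smul c v _ h1 => rw [mul_smul_comm]; exact Submodule.smul_mem _ _ h1
        | zero => intro y hy; rw [zero_mul]; exact Submodule.zero_mem _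
        | add u w _ _ h1 h2 =>
            intro y hy; rw [add_mul]; exact Submodule.add_mem _ (h1 y hy) (h2 y hy)
        | smul c u _ h1 =>
            intro y hy; rw [smul_mul_assoc]; exact Submodule.smul_mem _ _ (h1 y hy)
      intro y hy
      exact aux x hx y hy
  | add x y hx hy => exact Submodule.add_mem _ hx hy

lemma contraction_unique {l : ℕ} (a) (D : Module.End ℂ (Lam l)) (hD : IsContraction l a D) :
    D = pc l a := by
  obtain ⟨h1, hgen, hleib⟩ := hD
  have hleib1 : ∀ b (y : Lam l), D (gen l b * y) =
      (if a = b then (1:ℂ) else 0) • y - gen l b * D y := by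
    intro b y
    have := hleib 1 (fun _ => b) y
    simp only [List.ofFn_succ, List.ofFn_zero, List.prod_cons, List.prod_nil, mul_one,
      pow_one, neg_smul, one_smul] at this
    rw [this, hgen b]
    split_ifs <;> simp [sub_eq_add_neg]
  have key : ∀ L : List (Fin l ⊕ Fin l),
      D ((L.map (gen l)).prod) = pc l a ((L.map (gen l)).prod) := by
    intro L
    induction L with
    | nil => simp [h1, pc_one]
    | cons b L ih =>
        simp only [List.map_cons, List.prod_cons]
        rw [hleib1, pc_gen_mul, ih]
  refine LinearMap.ext fun x => ?_
  have hx : x ∈ Submodule.span ℂ (monSet l) := by rw [monSet_span]; trivial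
  induction hx using Submodule.span_induction with
  | mem u hu =>
      obtain ⟨L, rfl⟩ := hu
      exact key L
  | zero => simp
  | add u v _ _ h1 h2 => simp [map_add, h1, h2]
  | smul c u _ h1 => simp [map_smul, h1]

end aux

/-- for l ≥ 3, Σ_{i=3}^{l} (H_{η₁η₂ηᵢ}∘H_{η₁η₂ξᵢ} + H_{η₁η₂ξᵢ}∘H_{η₁η₂ηᵢ}) = 0,
realizing the second relation (lowest weight −2(ε₁+ε₂)) of Table 2.1.2 for h(0|2l).
(Indices 0-based: the sum runs over i : Fin l with 2 ≤ i.) -/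
theorem ham_relation2 (l : ℕ) (hl : 3 ≤ l)
    (pd : (Fin l ⊕ Fin l) → Module.End ℂ (Lam l))
    (hpd : ∀ a, IsContraction l a (pd a)) :
    ∑ i ∈ Finset.univ.filter (fun i : Fin l => 2 ≤ (i : ℕ)),
      (Ham l pd (etav l ⟨0, by omega⟩ * etav l ⟨1, by omega⟩ * etav l i) ∘ₗ
         Ham l pd (etav l ⟨0, by omega⟩ * etav l ⟨1, by omega⟩ * xiv l i) +
       Ham l pd (etav l ⟨0, by omega⟩ * etav l ⟨1, by omega⟩ * xiv l i) ∘ₗ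
         Ham l pd (etav l ⟨0, by omega⟩ * etav l ⟨1, by omega⟩ * etav l i)) = 0 := by
  have hpc : pd = fun a => pc l a := funext fun a => contraction_unique a (pd a) (hpd a)
  subst hpc
  refine Finset.sum_eq_zero fun i hi => ?_
  have h2 : 2 ≤ (i : ℕ) := (Finset.mem_filter.mp hi).2
  have hab : (⟨0, by omega⟩ : Fin l) ≠ ⟨1, by omega⟩ :=
    Fin.ne_of_val_ne (show (0:ℕ) ≠ 1 by omega)
  have hac : (⟨0, by omega⟩ : Fin l) ≠ i := Fin.ne_of_val_ne (show (0:ℕ) ≠ ↑i by omega)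
  have hbc : (⟨1, by omega⟩ : Fin l) ≠ i := Fin.ne_of_val_ne (show (1:ℕ) ≠ ↑i by omega)
  exact key _ _ _ hab hac hbc
end

section
/- Let l ≥ 5. For every i with 3 < i ≤ l−1, the even endomorphism H_{ηᵢξᵢ₊₁} = L_{ξᵢ₊₁}∘∂_{ξᵢ} − L_{ηᵢ}∘∂_{ηᵢ₊₁} of Λ commutes with the odd endomorphism H_{η₁η₂η₃}: [H_{ηᵢξᵢ₊₁}, H_{η₁η₂η₃}] = 0. This realizes the relations {ξᵢηᵢ₊₁, η₁η₂η₃} = 0 for i > 3 between the generators of n₊ of o(2l) and the extra generator Y = H_{η₁η₂η₃} of h(0|2l) stated in the paper (§2.1.2). -/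
/-!
Write `H_f = ∑ₐ L_{∂ₐ f} ∂_{ā}`, where `ā` is the index of the opposite kind (`ξᵢ ↔ ηᵢ`).
The Leibniz rule for contractions gives `H_{ζ_b y} = L_y ∂_{b̄} - L_{ζ_b} H_y`, so
`H_{ηᵢ ξⱼ} = L_{ξⱼ} ∂_{ξᵢ} - L_{ηᵢ} ∂_{ηⱼ}` and `H_{η_a η_b η_c}` is a signed sum of the three
operators `L_{η_r η_s} ∂_{ξ_t}` with `{r, s, t} = {a, b, c}`. When `j ∉ {a, b, c}`, every such
operator commutes with both summands of `H_{ηᵢ ξⱼ}`: contractions anticommute with each other and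
with multiplication by a generator of a different index, and the even element `η_r η_s` commutes
with every generator.
-/

open ExteriorAlgebra LinearMap

variable {l : ℕ}

theorem Lmul_eq_lmul (g : Lam l) : Lmul l g = Algebra.lmul ℂ (Lam l) g := rfl

theorem gen_mul_gen_eq_neg (a b : Fin l ⊕ Fin l) : gen l a * gen l b = -(gen l b * gen l a) :=
  eq_neg_of_add_eq_zero_left (ι_add_mul_swap _ _)

theorem commute_gen_gen_mul_gen (p r s : Fin l ⊕ Fin l) :
    Commute (gen l p) (gen l r * gen l s) := by
  rw [commute_iff_eq, ← mul_assoc, gen_mul_gen_eq_neg p r, neg_mul, mul_assoc,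
    gen_mul_gen_eq_neg p s, mul_neg, neg_neg, mul_assoc]

theorem ι_eq_sum_smul_gen (v : (Fin l ⊕ Fin l) → ℂ) : ι ℂ v = ∑ b, v b • gen l b := by
  simp only [gen, ← map_smul, ← map_sum]
  congr 1
  ext c
  simp [Pi.single_apply]

namespace IsContraction

variable {a : Fin l ⊕ Fin l} {D : Module.End ℂ (Lam l)}

theorem map_gen_mul (hD : IsContraction l a D) (b : Fin l ⊕ Fin l) (y : Lam l) :
    D (gen l b * y) = (if a = b then y else 0) - gen l b * D y := by
  have h := hD.2.2 1 (fun _ => b) y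
  simp only [List.ofFn_succ, List.ofFn_zero, List.prod_cons, List.prod_nil, mul_one,
    pow_one, neg_smul, one_smul] at h
  rw [h, hD.2.1 b, ite_mul, one_mul, zero_mul, sub_eq_add_neg]

theorem map_gen_mul_of_ne (hD : IsContraction l a D) {b : Fin l ⊕ Fin l} (hab : a ≠ b)
    (y : Lam l) : D (gen l b * y) = -(gen l b * D y) := by
  rw [hD.map_gen_mul, if_neg hab, zero_sub]

theorem map_ι_mul (hD : IsContraction l a D) (v : (Fin l ⊕ Fin l) → ℂ) (y : Lam l) :
    D (ι ℂ v * y) = v a • y - ι ℂ v * D y := by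
  simp only [ι_eq_sum_smul_gen v, Finset.sum_mul, map_sum, smul_mul_assoc, map_smul,
    hD.map_gen_mul, smul_sub, Finset.sum_sub_distrib, smul_ite, smul_zero,
    Finset.sum_ite_eq, Finset.mem_univ, if_true]

theorem map_algebraMap (hD : IsContraction l a D) (r : ℂ) : D (algebraMap ℂ (Lam l) r) = 0 := by
  rw [Algebra.algebraMap_eq_smul_one, map_smul, hD.1, smul_zero]

theorem anticomm {b : Fin l ⊕ Fin l} {D' : Module.End ℂ (Lam l)} (hD : IsContraction l a D)
    (hD' : IsContraction l b D') (x : Lam l) : D (D' x) = -D' (D x) := by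
  rw [eq_neg_iff_add_eq_zero]
  induction x using CliffordAlgebra.left_induction with
  | algebraMap r => simp only [hD.map_algebraMap, hD'.map_algebraMap, map_zero, add_zero]
  | add x y hx hy => rw [map_add, map_add, map_add, map_add, add_add_add_comm, hx, hy, add_zero]
  | ι_mul x v hx =>
    change D (D' (ι ℂ v * x)) + D' (D (ι ℂ v * x)) = 0
    calc _ = ι ℂ v * D (D' x) + ι ℂ v * D' (D x) := by
          simp only [hD.map_ι_mul, hD'.map_ι_mul, map_sub, map_smul]; abel
      _ = 0 := by rw [← mul_add, hx, mul_zero]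

end IsContraction

theorem commute_Lmul_gen_mul_Lmul_gen_mul_gen_mul {p q r s t : Fin l ⊕ Fin l}
    {Dq Dt : Module.End ℂ (Lam l)} (hq : IsContraction l q Dq) (ht : IsContraction l t Dt)
    (hqr : q ≠ r) (hqs : q ≠ s) (htp : t ≠ p) :
    Commute (Lmul l (gen l p) * Dq) (Lmul l (gen l r * gen l s) * Dt) := by
  refine LinearMap.ext fun x => ?_
  simp only [Module.End.mul_apply, Lmul, mulLeft_apply]
  rw [mul_assoc (gen l r), hq.map_gen_mul_of_ne hqr, hq.map_gen_mul_of_ne hqs,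
    ht.map_gen_mul_of_ne htp, hq.anticomm ht]
  simp only [mul_neg, neg_neg, ← mul_assoc, (commute_gen_gen_mul_gen p r s).eq]

theorem ham_eq_sum (pd : (Fin l ⊕ Fin l) → Module.End ℂ (Lam l)) (f : Lam l) :
    Ham l pd f = ∑ a, Lmul l (pd a f) * pd a.swap := by
  rw [Ham, Finset.sum_add_distrib, Fintype.sum_sum_type]
  rfl

variable {pd : (Fin l ⊕ Fin l) → Module.End ℂ (Lam l)}

theorem ham_gen (hpd : ∀ a, IsContraction l a (pd a)) (b : Fin l ⊕ Fin l) :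
    Ham l pd (gen l b) = pd b.swap := by
  simp only [ham_eq_sum, (hpd _).2.1, Lmul_eq_lmul, apply_ite, map_one, map_zero, ite_mul,
    one_mul, zero_mul, Finset.sum_ite_eq', Finset.mem_univ, if_true]

theorem ham_gen_mul (hpd : ∀ a, IsContraction l a (pd a)) (b : Fin l ⊕ Fin l) (y : Lam l) :
    Ham l pd (gen l b * y) = Lmul l y * pd b.swap - Lmul l (gen l b) * Ham l pd y := by
  simp only [ham_eq_sum, (hpd _).map_gen_mul, Lmul_eq_lmul, map_sub, map_mul, apply_ite,
    map_zero, sub_mul, ite_mul, zero_mul, Finset.sum_sub_distrib, Finset.sum_ite_eq',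
    Finset.mem_univ, if_true, Finset.mul_sum, mul_assoc]

theorem ham_eta_mul_xi (hpd : ∀ a, IsContraction l a (pd a)) (i j : Fin l) :
    Ham l pd (etav l i * xiv l j) =
      Lmul l (xiv l j) * pd (Sum.inl i) - Lmul l (etav l i) * pd (Sum.inr j) := by
  rw [etav, xiv, ham_gen_mul hpd, ham_gen hpd]
  rfl

theorem ham_eta_mul_eta_mul_eta (hpd : ∀ a, IsContraction l a (pd a)) (a b c : Fin l) :
    Ham l pd (etav l a * etav l b * etav l c) =
      Lmul l (etav l b * etav l c) * pd (Sum.inl a)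
        - Lmul l (etav l a * etav l c) * pd (Sum.inl b)
        + Lmul l (etav l a * etav l b) * pd (Sum.inl c) := by
  simp only [etav, mul_assoc, ham_gen_mul hpd, ham_gen hpd, Lmul_eq_lmul, map_mul, mul_sub]
  rw [sub_sub_eq_add_sub, add_sub_right_comm]
  rfl

theorem commute_ham_eta_mul_xi_Lmul_eta_mul_eta_mul (hpd : ∀ a, IsContraction l a (pd a))
    {i j r s t : Fin l} (hr : j ≠ r) (hs : j ≠ s) (ht : j ≠ t) :
    Commute (Ham l pd (etav l i * xiv l j)) (Lmul l (etav l r * etav l s) * pd (Sum.inl t)) := by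
  rw [ham_eta_mul_xi hpd]
  refine .sub_left ?_ ?_
  · exact commute_Lmul_gen_mul_Lmul_gen_mul_gen_mul (hpd _) (hpd _) Sum.inl_ne_inr
      Sum.inl_ne_inr (Sum.inl_injective.ne ht.symm)
  · exact commute_Lmul_gen_mul_Lmul_gen_mul_gen_mul (hpd _) (hpd _) (Sum.inr_injective.ne hr)
      (Sum.inr_injective.ne hs) Sum.inl_ne_inr

theorem commute_ham_eta_mul_xi_ham_eta_mul_eta_mul_eta (hpd : ∀ a, IsContraction l a (pd a))
    {i j a b c : Fin l} (ha : j ≠ a) (hb : j ≠ b) (hc : j ≠ c) :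
    Commute (Ham l pd (etav l i * xiv l j)) (Ham l pd (etav l a * etav l b * etav l c)) := by
  rw [ham_eta_mul_eta_mul_eta hpd]
  exact ((commute_ham_eta_mul_xi_Lmul_eta_mul_eta_mul hpd hb hc ha).sub_right
    (commute_ham_eta_mul_xi_Lmul_eta_mul_eta_mul hpd ha hc hb)).add_right
    (commute_ham_eta_mul_xi_Lmul_eta_mul_eta_mul hpd ha hb hc)

/-- for l ≥ 5 and every i with 3 < i ≤ l−1, the even operator
H_{ηᵢξᵢ₊₁} = L_{ξᵢ₊₁}∘∂_{ξᵢ} − L_{ηᵢ}∘∂_{ηᵢ₊₁} commutes with the odd operator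
H_{η₁η₂η₃}, realizing the relations {ξᵢηᵢ₊₁, η₁η₂η₃} = 0 for i > 3 of §2.1.2.
(Indices 0-based: ηᵢ ↦ i−1, ξᵢ₊₁ ↦ i.) -/
theorem ham_Chevalley_Y_relations_high (l : ℕ) (hl : 5 ≤ l)
    (pd : (Fin l ⊕ Fin l) → Module.End ℂ (Lam l))
    (hpd : ∀ a, IsContraction l a (pd a))
    (D : Module.End ℂ (Lam l))
    (hD : D = Ham l pd (etav l ⟨0, by omega⟩ * etav l ⟨1, by omega⟩ * etav l ⟨2, by omega⟩)) :
    ∀ (i : ℕ) (h1 : 3 < i) (h2 : i ≤ l - 1),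
      Ham l pd (etav l ⟨i - 1, by omega⟩ * xiv l ⟨i, by omega⟩) =
        Lmul l (xiv l ⟨i, by omega⟩) ∘ₗ pd (Sum.inl ⟨i - 1, by omega⟩)
          - Lmul l (etav l ⟨i - 1, by omega⟩) ∘ₗ pd (Sum.inr ⟨i, by omega⟩) ∧
      Ham l pd (etav l ⟨i - 1, by omega⟩ * xiv l ⟨i, by omega⟩) ∘ₗ D -
        D ∘ₗ Ham l pd (etav l ⟨i - 1, by omega⟩ * xiv l ⟨i, by omega⟩) = 0 := by
  intro i h1 h2
  subst hD
  refine ⟨ham_eta_mul_xi hpd _ _, sub_eq_zero.2 (Commute.eq ?_)⟩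
  exact commute_ham_eta_mul_xi_ham_eta_mul_eta_mul_eta hpd
    (Fin.ne_of_val_ne (show i ≠ 0 by omega)) (Fin.ne_of_val_ne (show i ≠ 1 by omega))
    (Fin.ne_of_val_ne (show i ≠ 2 by omega))
end
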